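/- Cross-orthogonality identity: for 0 < q < 1, 0 < a < q^{-1}, b < 0 and all nonnegative integers n, n', Σ_{m≥0} ((-1)^m q^{m(m-1)/2}/(q;q)_m) · M_n(q^{-m}; a, -b/a; q) · M_{n'}(q^{-m}; b, -a/b; q) = 0. -/

import Mathlib

noncomputable def qPoch (a q : ℝ) (n : ℕ) : ℝ := ∏ j ∈ Finset.range n, (1 - a * q ^ j)

noncomputable def qMeixner (n : ℕ) (x a c q : ℝ) : ℝ :=
  ∑ k ∈ Finset.range (n + 1),
    (qPoch (q ^ (-(n : ℤ))) q k * qPoch x q k * (-q ^ (n + 1) / c) ^ k) /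
      (qPoch (a * q) q k * qPoch q q k)

open Finset Polynomial Filter

noncomputable def aCoef (q : ℝ) (m : ℕ) : ℝ := (-1 : ℝ) ^ m * q ^ (m * (m - 1) / 2) / qPoch q q m

lemma qPoch_q_pos {q : ℝ} (hq0 : 0 < q) (hq1 : q < 1) (m : ℕ) : 0 < qPoch q q m := by
  apply Finset.prod_pos
  intro j _
  have h : q ^ (j + 1) < 1 := pow_lt_one₀ hq0.le hq1 (Nat.succ_ne_zero j)
  rw [pow_succ, mul_comm] at h
  linarith

lemma one_sub_q_pow_pos {q : ℝ} (hq0 : 0 < q) (hq1 : q < 1) (m : ℕ) : 0 < 1 - q * q ^ m := by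
  have h : q ^ (m + 1) < 1 := pow_lt_one₀ hq0.le hq1 (Nat.succ_ne_zero m)
  rw [pow_succ, mul_comm] at h
  linarith

lemma expo_succ (m : ℕ) : (m + 1) * (m + 1 - 1) / 2 = m * (m - 1) / 2 + m := by
  have h2 : 2 ∣ m * (m - 1) := by
    rcases Nat.even_or_odd m with h | h
    · exact Dvd.dvd.mul_right h.two_dvd _
    · cases m with
      | zero => simp
      | succ k =>
        refine Dvd.dvd.mul_left ?_ _
        simpa using (Nat.Odd.sub_odd h odd_one).two_dvd
  have h3 : (m + 1) * (m + 1 - 1) = m * (m - 1) + 2 * m := by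
    cases m with
    | zero => rfl
    | succ k => simp only [Nat.succ_sub_one]; ring
  have key : ∀ A B : ℕ, 2 ∣ A → B = A + 2 * m → B / 2 = A / 2 + m := by
    intro A B hA hB; omega
  exact key _ _ h2 h3

lemma aCoef_succ {q : ℝ} (hq0 : 0 < q) (hq1 : q < 1) (m : ℕ) :
    aCoef q (m + 1) = aCoef q m * (-(q ^ m) / (1 - q * q ^ m)) := by
  have hP := (qPoch_q_pos hq0 hq1 m).ne'
  have hQ := (one_sub_q_pow_pos hq0 hq1 m).ne'
  unfold aCoef
  rw [qPoch, Finset.prod_range_succ, ← qPoch, expo_succ m, pow_add, pow_succ]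
  field_simp
  ring

lemma summable_qE {q : ℝ} (hq0 : 0 < q) (hq1 : q < 1) (x : ℝ) :
    Summable (fun m : ℕ => aCoef q m * x ^ m) := by
  rcases eq_or_ne x 0 with rfl | hx
  · apply summable_of_ne_finset_zero (s := {0})
    intro m hm
    simp only [Finset.mem_singleton] at hm
    simp [zero_pow hm]
  · have hne : ∀ m : ℕ, aCoef q m * x ^ m ≠ 0 := by
      intro m
      apply mul_ne_zero
      · unfold aCoef
        apply div_ne_zero
        · positivity
        · exact (qPoch_q_pos hq0 hq1 m).ne'
      · exact pow_ne_zero _ hx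
    apply summable_of_ratio_test_tendsto_lt_one (l := 0) one_pos
      (Eventually.of_forall hne)
    have heq : ∀ m : ℕ, ‖aCoef q (m + 1) * x ^ (m + 1)‖ / ‖aCoef q m * x ^ m‖
        = q ^ m * |x| / (1 - q * q ^ m) := by
      intro m
      have hstep : aCoef q (m + 1) * x ^ (m + 1)
          = (aCoef q m * x ^ m) * (-(q ^ m) * x / (1 - q * q ^ m)) := by
        rw [aCoef_succ hq0 hq1 m, pow_succ]
        ring
      rw [hstep, norm_mul, mul_div_cancel_left₀ _ (norm_ne_zero_iff.2 (hne m)),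
        norm_div, norm_mul, norm_neg, Real.norm_eq_abs, Real.norm_eq_abs, Real.norm_eq_abs,
        abs_of_pos (pow_pos hq0 m), abs_of_pos (one_sub_q_pow_pos hq0 hq1 m)]
    have h1 : Tendsto (fun m : ℕ => q ^ m * |x|) atTop (nhds 0) := by
      simpa using (tendsto_pow_atTop_nhds_zero_of_lt_one hq0.le hq1).mul_const |x|
    have h2 : Tendsto (fun m : ℕ => 1 - q * q ^ m) atTop (nhds 1) := by
      have h3 := (tendsto_pow_atTop_nhds_zero_of_lt_one hq0.le hq1).const_mul q
      simpa using tendsto_const_nhds.sub h3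
    have h4 := h1.div h2 one_ne_zero
    simp only [zero_div] at h4
    simpa only [heq, Pi.div_def] using h4

lemma qE_step {q : ℝ} (hq0 : 0 < q) (hq1 : q < 1) (x : ℝ) (m : ℕ) :
    aCoef q (m + 1) * x ^ (m + 1) - aCoef q (m + 1) * (q * x) ^ (m + 1)
      = -x * (aCoef q m * (q * x) ^ m) := by
  have hQ := (one_sub_q_pow_pos hq0 hq1 m).ne'
  rw [aCoef_succ hq0 hq1 m]
  field_simp
  linear_combination (-(aCoef q m * q ^ m * x * x ^ m)) * mul_inv_cancel₀ hQ

lemma qE_funct_eq {q : ℝ} (hq0 : 0 < q) (hq1 : q < 1) (x : ℝ) :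
    ∑' m : ℕ, aCoef q m * x ^ m = (1 - x) * ∑' m : ℕ, aCoef q m * (q * x) ^ m := by
  have h1 := summable_qE hq0 hq1 x
  have h2 := summable_qE hq0 hq1 (q * x)
  have hd : ∑' m : ℕ, (aCoef q m * x ^ m - aCoef q m * (q * x) ^ m)
      = -x * ∑' m : ℕ, aCoef q m * (q * x) ^ m := by
    rw [(h1.sub h2).tsum_eq_zero_add]
    simp only [qE_step hq0 hq1 x]
    rw [tsum_mul_left]
    simp
  rw [h1.tsum_sub h2] at hd
  linear_combination hd

lemma qE_zero_at {q : ℝ} (hq0 : 0 < q) (hq1 : q < 1) (j : ℕ) :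
    ∑' m : ℕ, aCoef q m * ((q : ℝ) ^ (-(j : ℤ))) ^ m = 0 := by
  induction j with
  | zero =>
    have h := qE_funct_eq hq0 hq1 1
    simpa using h
  | succ j ih =>
    have hx : q * q ^ (-((j + 1 : ℕ) : ℤ)) = q ^ (-(j : ℤ)) := by
      have he : (-(j : ℤ)) = 1 + (-((j + 1 : ℕ) : ℤ)) := by push_cast; ring
      rw [he, zpow_add₀ hq0.ne', zpow_one]
    have h := qE_funct_eq hq0 hq1 ((q : ℝ) ^ (-((j + 1 : ℕ) : ℤ)))
    rw [hx, ih, mul_zero] at h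
    exact h

lemma zpow_swap {q : ℝ} (m i : ℕ) : (((q : ℝ) ^ (-(m : ℤ))) ^ i) = ((q : ℝ) ^ (-(i : ℤ))) ^ m := by
  rw [← zpow_natCast (q ^ (-(m : ℤ))) i, ← zpow_natCast (q ^ (-(i : ℤ))) m,
    ← zpow_mul, ← zpow_mul]
  ring_nf

lemma tsum_poly_zero {q : ℝ} (hq0 : 0 < q) (hq1 : q < 1) (P : Polynomial ℝ) :
    ∑' m : ℕ, aCoef q m * P.eval ((q : ℝ) ^ (-(m : ℤ))) = 0 := by
  have hrw : ∀ m : ℕ, aCoef q m * P.eval ((q : ℝ) ^ (-(m : ℤ)))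
      = ∑ i ∈ Finset.range (P.natDegree + 1),
          P.coeff i * (aCoef q m * ((q : ℝ) ^ (-(i : ℤ))) ^ m) := by
    intro m
    rw [Polynomial.eval_eq_sum_range, Finset.mul_sum]
    refine Finset.sum_congr rfl fun i _ => ?_
    rw [zpow_swap m i]
    ring
  calc ∑' m : ℕ, aCoef q m * P.eval ((q : ℝ) ^ (-(m : ℤ)))
      = ∑' m : ℕ, ∑ i ∈ Finset.range (P.natDegree + 1),
          P.coeff i * (aCoef q m * ((q : ℝ) ^ (-(i : ℤ))) ^ m) := by
        exact tsum_congr hrw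
    _ = ∑ i ∈ Finset.range (P.natDegree + 1),
          ∑' m : ℕ, P.coeff i * (aCoef q m * ((q : ℝ) ^ (-(i : ℤ))) ^ m) := by
        refine Summable.tsum_finsetSum fun i _ => ?_
        exact (summable_qE hq0 hq1 _).mul_left _
    _ = 0 := by
        refine Finset.sum_eq_zero fun i _ => ?_
        rw [tsum_mul_left, qE_zero_at hq0 hq1 i, mul_zero]

noncomputable def meixnerPoly (n : ℕ) (a c q : ℝ) : Polynomial ℝ :=
  ∑ k ∈ Finset.range (n + 1),
    Polynomial.C ((qPoch (q ^ (-(n : ℤ))) q k * (-q ^ (n + 1) / c) ^ k) /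
        (qPoch (a * q) q k * qPoch q q k)) *
      ∏ j ∈ Finset.range k, (1 - Polynomial.C (q ^ j) * Polynomial.X)

lemma meixnerPoly_eval (n : ℕ) (a c q x : ℝ) :
    (meixnerPoly n a c q).eval x = qMeixner n x a c q := by
  unfold meixnerPoly qMeixner
  rw [Polynomial.eval_finset_sum]
  refine Finset.sum_congr rfl fun k _ => ?_
  rw [Polynomial.eval_mul, Polynomial.eval_C, Polynomial.eval_prod]
  have hp : ∏ j ∈ Finset.range k, Polynomial.eval x (1 - Polynomial.C (q ^ j) * Polynomial.X)
      = qPoch x q k := by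
    unfold qPoch
    refine Finset.prod_congr rfl fun j _ => ?_
    simp [mul_comm]
  rw [hp]
  ring

theorem qMeixner_cross_orthogonality (q a b : ℝ) (hq0 : 0 < q) (hq1 : q < 1)
    (ha0 : 0 < a) (ha1 : a < q⁻¹) (hb : b < 0) (n n' : ℕ) :
    ∑' m : ℕ, ((-1 : ℝ) ^ m * q ^ (m * (m - 1) / 2) / qPoch q q m) *
        qMeixner n (q ^ (-(m : ℤ))) a (-b / a) q * qMeixner n' (q ^ (-(m : ℤ))) b (-a / b) q
      = 0 := by
  have key := tsum_poly_zero hq0 hq1 (meixnerPoly n a (-b / a) q * meixnerPoly n' b (-a / b) q)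
  simp only [Polynomial.eval_mul, meixnerPoly_eval] at key
  rw [← key]
  refine tsum_congr fun m => ?_
  rw [aCoef]
  ring
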